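/- For every n ≥ 0, the number of nondecreasing Dyck words of semilength n equals the number of Dyck words of semilength n whose height (the maximum over all prefixes of the prefix height) is at most 3. (Equivalently, nondecreasing Dyck paths of length 2n are in bijection with planted plane trees with n+1 nodes of height at most 4.) -/

import Mathlib

/-- Height of the prefix of length `i` of the word `w`
(`true` = U-step, `false` = D-step): number of U's minus number of D's. -/
def prefixHeight (w : List Bool) (i : ℕ) : ℤ :=
  ((w.take i).count true : ℤ) - ((w.take i).count false : ℤ)

/-- `w` is a Dyck word: every prefix has nonnegative height and the whole word
has height 0 (equally many U's and D's). -/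
def IsDyckWord (w : List Bool) : Prop :=
  (∀ i, i ≤ w.length → 0 ≤ prefixHeight w i) ∧ prefixHeight w w.length = 0

/-- A valley at (0-based) position `i`: a D-step immediately followed by a U-step. -/
def IsValley (w : List Bool) (i : ℕ) : Prop :=
  w[i]? = some false ∧ w[i + 1]? = some true

/-- A nondecreasing Dyck word: a Dyck word whose valley altitudes, read left to
right, form a nondecreasing sequence.  The altitude of a valley at position `i`
is the height of the prefix ending at that D-step, i.e. of length `i + 1`. -/
def IsNondecDyck (w : List Bool) : Prop :=
  IsDyckWord w ∧ ∀ i j, IsValley w i → IsValley w j → i ≤ j →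
    prefixHeight w (i + 1) ≤ prefixHeight w (j + 1)

/-- The set of nondecreasing Dyck words of semilength `n`. -/
def nondecDyck (n : ℕ) : Set (List Bool) :=
  {w | w.length = 2 * n ∧ IsNondecDyck w}

/-- `d n` = number of nondecreasing Dyck words of semilength `n`. -/
noncomputable def numNondecDyck (n : ℕ) : ℕ := (nondecDyck n).ncard


/-!
Both sides are counted by scanning words left to right with a small memory. A walk of height at
most `3` only needs its current height `h`; a nondecreasing Dyck word needs `h`, a lower bound `v`
for its next valley (the altitude of the last one) and whether its last step went down. Counting
completions of each state by the first letter gives linear recursions. Solving them, a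
nondecreasing walk at height `v + d` with bound `v` has `a k + d * b k` completions of length
`v + d + 2k`, where `a k` and `b k` count walks of length `2k` and height at most `3` from heights
`0` and `2` to `0`. Taking `v = d = 0`, both sides equal `a n` (the Fibonacci number `F (2n - 1)`).
-/

theorem ncard_length_eq_zero {α : Type*} (Q : List α → Prop) [Decidable (Q [])] :
    {w : List α | w.length = 0 ∧ Q w}.ncard = if Q [] then 1 else 0 := by
  have hset : {w : List α | w.length = 0 ∧ Q w} = if Q [] then {[]} else ∅ := by
    ext (_ | _) <;> split_ifs <;> simp [*]
  rw [hset]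
  split_ifs <;> simp

theorem ncard_length_eq_succ (Q : List Bool → Prop) (L : ℕ) :
    {w | w.length = L + 1 ∧ Q w}.ncard =
      {t | t.length = L ∧ Q (true :: t)}.ncard + {t | t.length = L ∧ Q (false :: t)}.ncard := by
  have hsplit : {w | w.length = L + 1 ∧ Q w} =
      List.cons true '' {t | t.length = L ∧ Q (true :: t)} ∪
        List.cons false '' {t | t.length = L ∧ Q (false :: t)} := by
    ext (_ | ⟨b, t⟩)
    · simp
    · cases b <;> simp
  have hfin (b : Bool) : {t | t.length = L ∧ Q (b :: t)}.Finite :=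
    (List.finite_length_eq Bool L).subset fun _ ht => ht.1
  have hdisj : Disjoint (List.cons true '' {t | t.length = L ∧ Q (true :: t)})
      (List.cons false '' {t | t.length = L ∧ Q (false :: t)}) :=
    Set.disjoint_left.mpr (by rintro _ ⟨_, _, rfl⟩ ⟨_, _, h⟩; simp at h)
  rw [hsplit, Set.ncard_union_eq hdisj ((hfin true).image _) ((hfin false).image _),
    Set.ncard_image_of_injective _ List.cons_injective,
    Set.ncard_image_of_injective _ List.cons_injective]

def stepHeight (b : Bool) : ℤ := if b then 1 else -1

@[simp]
theorem prefixHeight_zero (w : List Bool) : prefixHeight w 0 = 0 := by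
  simp [prefixHeight]

theorem prefixHeight_cons_succ (b : Bool) (t : List Bool) (i : ℕ) :
    prefixHeight (b :: t) (i + 1) = stepHeight b + prefixHeight t i := by
  cases b <;> simp [prefixHeight, stepHeight] <;> ring

theorem neg_length_le_prefixHeight (w : List Bool) :
    -(w.length : ℤ) ≤ prefixHeight w w.length := by
  have := List.count_le_length (a := false) (l := w)
  simp only [prefixHeight, List.take_length]
  omega

theorem forall_prefixHeight_cons (P : ℤ → Prop) (h : ℤ) (b : Bool) (t : List Bool) :
    (∀ i ≤ (b :: t).length, P (h + prefixHeight (b :: t) i)) ↔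
      P h ∧ ∀ i ≤ t.length, P (h + stepHeight b + prefixHeight t i) := by
  simp only [List.length_cons, ← Nat.lt_succ_iff, Nat.forall_lt_succ_left, prefixHeight_zero,
    add_zero, prefixHeight_cons_succ, add_assoc]

theorem forall_prefixHeight_nil (P : ℤ → Prop) (h : ℤ) :
    (∀ i ≤ ([] : List Bool).length, P (h + prefixHeight [] i)) ↔ P h := by
  simp

def DyckFrom (h : ℤ) (w : List Bool) : Prop :=
  (∀ i ≤ w.length, 0 ≤ h + prefixHeight w i) ∧ h + prefixHeight w w.length = 0

theorem isDyckWord_iff_dyckFrom_zero (w : List Bool) : IsDyckWord w ↔ DyckFrom 0 w := by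
  simp [IsDyckWord, DyckFrom]

theorem dyckFrom_nil (h : ℤ) : DyckFrom h [] ↔ h = 0 := by
  rw [DyckFrom, forall_prefixHeight_nil (0 ≤ ·)]
  simp only [List.length_nil, prefixHeight_zero, add_zero]
  omega

theorem dyckFrom_cons (h : ℤ) (b : Bool) (t : List Bool) :
    DyckFrom h (b :: t) ↔ 0 ≤ h ∧ DyckFrom (h + stepHeight b) t := by
  rw [DyckFrom, DyckFrom, forall_prefixHeight_cons (0 ≤ ·), List.length_cons,
    prefixHeight_cons_succ, add_assoc, and_assoc]

theorem DyckFrom.nonneg {h : ℤ} {w : List Bool} (hw : DyckFrom h w) : 0 ≤ h := by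
  simpa using hw.1 0 (Nat.zero_le _)

theorem DyckFrom.le_length {h : ℤ} {w : List Bool} (hw : DyckFrom h w) : h ≤ w.length := by
  linarith [neg_length_le_prefixHeight w, hw.2]

def HeightLe (k h : ℤ) (w : List Bool) : Prop :=
  ∀ i ≤ w.length, h + prefixHeight w i ≤ k

theorem heightLe_nil (k h : ℤ) : HeightLe k h [] ↔ h ≤ k :=
  forall_prefixHeight_nil (· ≤ k) h

theorem heightLe_cons (k h : ℤ) (b : Bool) (t : List Bool) :
    HeightLe k h (b :: t) ↔ h ≤ k ∧ HeightLe k (h + stepHeight b) t :=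
  forall_prefixHeight_cons (· ≤ k) h b t

theorem isValley_cons_zero (b : Bool) (t : List Bool) :
    IsValley (b :: t) 0 ↔ b = false ∧ t[0]? = some true := by
  simp [IsValley]

theorem isValley_cons_succ (b : Bool) (t : List Bool) (i : ℕ) :
    IsValley (b :: t) (i + 1) ↔ IsValley t i := by
  simp [IsValley]

theorem forall_isValley_cons (P : ℕ → Prop) (b : Bool) (t : List Bool) :
    (∀ j, IsValley (b :: t) j → P j) ↔
      (IsValley (b :: t) 0 → P 0) ∧ ∀ j, IsValley t j → P (j + 1) := by
  simp only [← isValley_cons_succ b t]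
  exact Nat.and_forall_add_one.symm

/-- `v` is a lower bound for the next valley altitude, e.g. the altitude of the last valley read. -/
def NondecValleys (h v : ℤ) (w : List Bool) : Prop :=
  (∀ j, IsValley w j → v ≤ h + prefixHeight w (j + 1)) ∧
    ∀ i, IsValley w i → ∀ j, IsValley w j → i ≤ j →
      prefixHeight w (i + 1) ≤ prefixHeight w (j + 1)

theorem nondecValleys_cons (h v : ℤ) (b : Bool) (t : List Bool) :
    NondecValleys h v (b :: t) ↔ NondecValleys (h + stepHeight b) v t ∧
      (IsValley (b :: t) 0 → v ≤ h + stepHeight b ∧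
        NondecValleys (h + stepHeight b) (h + stepHeight b) t) := by
  simp only [NondecValleys, forall_isValley_cons _ b t, prefixHeight_cons_succ, prefixHeight_zero,
    add_zero, add_assoc, add_le_add_iff_left, le_add_iff_nonneg_right, Nat.add_le_add_iff_right,
    le_refl, zero_le, nonpos_iff_eq_zero, Nat.add_one_ne_zero, false_imp_iff, imp_true_iff,
    true_imp_iff, true_and]
  tauto

theorem NondecValleys.mono {h v v' : ℤ} {w : List Bool} (hv : v' ≤ v)
    (hw : NondecValleys h v w) :
    NondecValleys h v' w :=
  ⟨fun j hj => hv.trans (hw.1 j hj), hw.2⟩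

theorem nondecValleys_of_length_le_one (h v : ℤ) {w : List Bool} (hw : w.length ≤ 1) :
    NondecValleys h v w := by
  have hno (j : ℕ) : ¬IsValley w j := fun hj =>
    (List.getElem?_eq_some_iff.mp hj.2).1.not_ge (by omega)
  exact ⟨fun j hj => (hno j hj).elim, fun i hi => (hno i hi).elim⟩

theorem nondecValleys_true_cons (h v : ℤ) (t : List Bool) :
    NondecValleys h v (true :: t) ↔ NondecValleys (h + 1) v t := by
  simp [nondecValleys_cons, isValley_cons_zero, stepHeight]

theorem nondecValleys_false_true_cons (h v : ℤ) (t : List Bool) :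
    NondecValleys (h + 1) v (false :: true :: t) ↔ v ≤ h ∧ NondecValleys (h + 1) h t := by
  have hstep : h + 1 + stepHeight false = h := by simp [stepHeight]
  have hvalley : IsValley (false :: true :: t) 0 := (isValley_cons_zero _ _).mpr ⟨rfl, rfl⟩
  simp only [nondecValleys_cons (h + 1) v false, hstep, nondecValleys_true_cons, hvalley,
    true_imp_iff]
  exact ⟨fun ⟨_, hv, ht⟩ => ⟨hv, ht⟩, fun ⟨hv, ht⟩ => ⟨ht.mono hv, hv, ht⟩⟩

theorem nondecValleys_false_false_cons (h v : ℤ) (t : List Bool) :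
    NondecValleys (h + 1) v (false :: false :: t) ↔ NondecValleys h v (false :: t) := by
  simp [nondecValleys_cons (h + 1) v false, isValley_cons_zero, stepHeight]

theorem isNondecDyck_iff (w : List Bool) :
    IsNondecDyck w ↔ DyckFrom 0 w ∧ NondecValleys 0 0 w := by
  rw [IsNondecDyck, isDyckWord_iff_dyckFrom_zero]
  refine and_congr_right fun hw =>
    ⟨fun hmono => ⟨fun j hj => ?_, fun i hi j hj => hmono i j hi hj⟩,
      fun hw' i j hi hj => hw'.2 i hi j hj⟩
  have hj_lt : j + 1 < w.length := (List.getElem?_eq_some_iff.mp hj.2).1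
  simpa using hw.1 (j + 1) hj_lt.le

noncomputable def heightLeCount (k : ℤ) (L : ℕ) (h : ℤ) : ℕ :=
  {w : List Bool | w.length = L ∧ DyckFrom h w ∧ HeightLe k h w}.ncard

theorem heightLeCount_zero {k : ℤ} (hk : 0 ≤ k) (h : ℤ) :
    heightLeCount k 0 h = if h = 0 then 1 else 0 := by
  classical
  rw [heightLeCount, ncard_length_eq_zero]
  simp only [dyckFrom_nil, heightLe_nil]
  grind

theorem heightLeCount_succ {k h : ℤ} (h0 : 0 ≤ h) (hk : h ≤ k) (L : ℕ) :
    heightLeCount k (L + 1) h = heightLeCount k L (h + 1) + heightLeCount k L (h - 1) := by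
  simp only [heightLeCount, ncard_length_eq_succ, dyckFrom_cons, heightLe_cons, stepHeight,
    h0, hk, true_and, if_true, Bool.false_eq_true, if_false, ← sub_eq_add_neg]

theorem heightLeCount_of_neg {k h : ℤ} (hh : h < 0) (L : ℕ) : heightLeCount k L h = 0 := by
  refine (congrArg Set.ncard (Set.eq_empty_of_forall_notMem ?_)).trans (Set.ncard_empty _)
  rintro w ⟨-, hw, -⟩
  exact hh.not_ge hw.nonneg

theorem heightLeCount_of_lt {k h : ℤ} (hh : k < h) (L : ℕ) : heightLeCount k L h = 0 := by
  refine (congrArg Set.ncard (Set.eq_empty_of_forall_notMem ?_)).trans (Set.ncard_empty _)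
  rintro w ⟨-, -, hw⟩
  exact hh.not_ge (by simpa using hw 0 (Nat.zero_le _))

theorem heightLeCount_three_two_mul_succ (k : ℕ) :
    heightLeCount 3 (2 * (k + 1)) 0 = heightLeCount 3 (2 * k) 0 + heightLeCount 3 (2 * k) 2 ∧
      heightLeCount 3 (2 * (k + 1)) 2 =
        heightLeCount 3 (2 * k) 0 + 2 * heightLeCount 3 (2 * k) 2 := by
  have h1 : heightLeCount 3 (2 * k + 1) 1 = heightLeCount 3 (2 * k) 2 + heightLeCount 3 (2 * k) 0 :=
    heightLeCount_succ (by norm_num) (by norm_num) _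
  have h3 : heightLeCount 3 (2 * k + 1) 3 = heightLeCount 3 (2 * k) 2 := by
    rw [heightLeCount_succ (by norm_num) le_rfl, heightLeCount_of_lt (by norm_num)]
    norm_num
  rw [mul_add, mul_one, heightLeCount_succ (h := 0) le_rfl (by norm_num),
    heightLeCount_succ (h := 2) (by norm_num) (by norm_num),
    heightLeCount_of_neg (h := 0 - 1) (by norm_num)]
  norm_num only [h1, h3]
  omega

noncomputable def nondecCountUp (L : ℕ) (h v : ℤ) : ℕ :=
  {w : List Bool | w.length = L ∧ DyckFrom h w ∧ NondecValleys h v w}.ncard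

/-- Continuations of a walk that has just stepped down to height `h`: an up-step now closes a
valley at altitude `h`. -/
noncomputable def nondecCountDown (L : ℕ) (h v : ℤ) : ℕ :=
  {w : List Bool | w.length = L ∧ DyckFrom h w ∧ NondecValleys (h + 1) v (false :: w)}.ncard

theorem nondecCountUp_zero (h v : ℤ) : nondecCountUp 0 h v = if h = 0 then 1 else 0 := by
  classical
  rw [nondecCountUp, ncard_length_eq_zero]
  simp [dyckFrom_nil, nondecValleys_of_length_le_one]

theorem nondecCountDown_zero (h v : ℤ) : nondecCountDown 0 h v = if h = 0 then 1 else 0 := by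
  classical
  rw [nondecCountDown, ncard_length_eq_zero]
  simp [dyckFrom_nil, nondecValleys_of_length_le_one]

theorem nondecCountUp_succ {h : ℤ} (h0 : 0 ≤ h) (L : ℕ) (v : ℤ) :
    nondecCountUp (L + 1) h v = nondecCountUp L (h + 1) v + nondecCountDown L (h - 1) v := by
  simp [nondecCountUp, nondecCountDown, ncard_length_eq_succ, dyckFrom_cons, stepHeight, h0,
    nondecValleys_true_cons, ← sub_eq_add_neg]

theorem nondecCountDown_succ {h : ℤ} (h0 : 0 ≤ h) (L : ℕ) (v : ℤ) :
    nondecCountDown (L + 1) h v =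
      (if v ≤ h then nondecCountUp L (h + 1) h else 0) + nondecCountDown L (h - 1) v := by
  by_cases hv : v ≤ h <;>
  simp [nondecCountUp, nondecCountDown, ncard_length_eq_succ, dyckFrom_cons, stepHeight, h0, hv,
    nondecValleys_false_true_cons, nondecValleys_false_false_cons, ← sub_eq_add_neg]

theorem nondecCountDown_of_neg {h : ℤ} (hh : h < 0) (L : ℕ) (v : ℤ) :
    nondecCountDown L h v = 0 := by
  refine (congrArg Set.ncard (Set.eq_empty_of_forall_notMem ?_)).trans (Set.ncard_empty _)
  rintro w ⟨-, hw, -⟩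
  exact hh.not_ge hw.nonneg

theorem nondecCountUp_of_length_lt {L : ℕ} {h : ℤ} (hL : L < h) (v : ℤ) :
    nondecCountUp L h v = 0 := by
  refine (congrArg Set.ncard (Set.eq_empty_of_forall_notMem ?_)).trans (Set.ncard_empty _)
  rintro w ⟨rfl, hw, -⟩
  exact hL.not_ge hw.le_length

theorem nondecCountDown_self (h : ℕ) (v : ℤ) : nondecCountDown h h v = 1 := by
  induction h with
  | zero => simp [nondecCountDown_zero]
  | succ h ih =>
    rw [nondecCountDown_succ (by positivity), nondecCountUp_of_length_lt (by push_cast; omega)]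
    simpa using ih

theorem nondecCountUp_self (h : ℕ) (v : ℤ) : nondecCountUp h h v = 1 := by
  cases h with
  | zero => simp [nondecCountUp_zero]
  | succ h =>
    rw [nondecCountUp_succ (by positivity), nondecCountUp_of_length_lt (by push_cast; omega)]
    simpa using nondecCountDown_self h v

theorem nondecCountDown_of_lt {L : ℕ} {h v : ℤ} (hv : h < v) (hL : (L : ℤ) ≠ h) :
    nondecCountDown L h v = 0 := by
  induction L generalizing h with
  | zero =>
    push_cast at hL
    simp [nondecCountDown_zero, hL.symm]
  | succ L ih =>
    rcases lt_or_ge h 0 with hh | hh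
    · exact nondecCountDown_of_neg hh _ _
    · rw [nondecCountDown_succ hh, if_neg hv.not_ge, ih (by omega) (by push_cast at hL; omega)]

theorem nondecCountDown_eq {k : ℕ}
    (hup : ∀ v d : ℕ, nondecCountUp (v + d + 2 * k) (v + d : ℕ) v =
      heightLeCount 3 (2 * k) 0 + d * heightLeCount 3 (2 * k) 2) (v d : ℕ) :
    nondecCountDown (v + d + 2 * k + 2) (v + d : ℕ) v =
      (d + 1) * (heightLeCount 3 (2 * k) 0 + heightLeCount 3 (2 * k) 2) := by
  have hvalley (u : ℕ) : nondecCountUp (u + 2 * k + 1) ((u : ℤ) + 1) u =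
      heightLeCount 3 (2 * k) 0 + heightLeCount 3 (2 * k) 2 := by
    simpa [add_right_comm _ 1] using hup u 1
  induction d with
  | zero =>
    rw [nondecCountDown_succ (by positivity), if_pos (by simp), add_zero, hvalley,
      nondecCountDown_of_lt (by omega) (by push_cast; omega)]
    ring
  | succ d ih =>
    rw [show v + (d + 1) + 2 * k + 2 = v + d + 2 * k + 2 + 1 by ring,
      nondecCountDown_succ (by positivity), if_pos (by push_cast; omega),
      show ((v + (d + 1) : ℕ) : ℤ) - 1 = (v + d : ℕ) by push_cast; ring, ih,
      show v + d + 2 * k + 2 = v + (d + 1) + 2 * k + 1 by ring, hvalley]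
    ring

theorem nondecCountUp_eq (k v d : ℕ) :
    nondecCountUp (v + d + 2 * k) (v + d : ℕ) v =
      heightLeCount 3 (2 * k) 0 + d * heightLeCount 3 (2 * k) 2 := by
  induction k generalizing v d with
  | zero => simpa [heightLeCount_zero] using nondecCountUp_self (v + d) v
  | succ k ih =>
    obtain ⟨h0, h2⟩ := heightLeCount_three_two_mul_succ k
    have hU := ih v (d + 1)
    rw [show v + (d + 1) + 2 * k = v + d + 2 * k + 1 by ring, ← add_assoc, Nat.cast_succ] at hU
    rw [h0, h2, show v + d + 2 * (k + 1) = v + d + 2 * k + 1 + 1 by ring,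
      nondecCountUp_succ (by positivity), hU]
    cases d with
    | zero =>
      rw [nondecCountDown_of_lt (by omega) (by push_cast; omega)]
      ring
    | succ d =>
      rw [show ((v + (d + 1) : ℕ) : ℤ) - 1 = (v + d : ℕ) by push_cast; ring,
        show v + (d + 1) + 2 * k + 1 = v + d + 2 * k + 2 by ring, nondecCountDown_eq ih]
      ring

/-- Nondecreasing Dyck words of semilength `n` are equinumerous with Dyck words
of semilength `n` of height at most `3`. -/
theorem nondecDyck_eq_heightLeThree (n : ℕ) :
    (nondecDyck n).ncard =
      {w : List Bool | w.length = 2 * n ∧ IsDyckWord w ∧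
        ∀ i, i ≤ w.length → prefixHeight w i ≤ 3}.ncard := by
  have hnondec : (nondecDyck n).ncard = nondecCountUp (2 * n) 0 0 := by
    simp only [nondecDyck, isNondecDyck_iff, nondecCountUp]
  have hheight : {w : List Bool | w.length = 2 * n ∧ IsDyckWord w ∧
      ∀ i, i ≤ w.length → prefixHeight w i ≤ 3}.ncard = heightLeCount 3 (2 * n) 0 := by
    simp only [heightLeCount, isDyckWord_iff_dyckFrom_zero, HeightLe, zero_add]
  rw [hnondec, hheight]
  simpa using nondecCountUp_eq n 0 0
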